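/- arXiv:1804.02743 — 2 statements merged into one kernel-verified Lean document; each statement's English description precedes it below -/
import Mathlib

section
/- Assume a random tournament T on n alternatives a_1,...,a_n is generated with independent edges where, for all i > j, the probability of the edge a_i → a_j is at most 0.6·√(log n / n). Then the probability that a_n is a king (can reach every other alternative by a directed path of length at most two) tends to 0 as n → ∞; hence with high probability the uncovered set UC(T) ≠ A. -/
/-- The set of (unordered) edges of a tournament on `n` alternatives, represented by the
ordered pairs `(i, j)` with `i < j`. -/
abbrev Edges (n : ℕ) := {q : Fin n × Fin n // q.1 < q.2}

/-- An orientation of all edges: `σ e = true` means the edge `e = (i, j)` (with `i < j`)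
is oriented from `a_i` to `a_j`. A tournament is exactly such an orientation. -/
abbrev Orient (n : ℕ) := Edges n → Bool

/-- `a_i` dominates `a_j` in the tournament given by the orientation `σ`. -/
def beats {n : ℕ} (σ : Orient n) (i j : Fin n) : Prop :=
  (∃ h : i < j, σ ⟨(i, j), h⟩ = true) ∨ (∃ h : j < i, σ ⟨(j, i), h⟩ = false)

/-- The probability of obtaining the particular tournament `σ` when each edge `(i, j)`
(`i < j`) is independently oriented from `a_i` to `a_j` with probability `p i j`. -/
noncomputable def prOf {n : ℕ} (p : Fin n → Fin n → ℝ) (σ : Orient n) : ℝ :=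
  ∏ e : Edges n, if σ e = true then p e.1.1 e.1.2 else 1 - p e.1.1 e.1.2

/-- The probability of the event `E` under the independent-edge random tournament model
with edge probabilities `p`. -/
noncomputable def Pr {n : ℕ} (p : Fin n → Fin n → ℝ) (E : Set (Orient n)) : ℝ :=
  ∑ σ : Orient n, E.indicator (prOf p) σ

/-!
Write `m = n + 1`, `q = 0.6 √(log m / m)`, and let `D` be the set of alternatives beaten by the
last one, `a_m`; each alternative lies in `D` with probability at most `q`. Take `M ≈ m ^ 0.49` and
`K ≈ 1.3 m q`. If `a_m` is a king, then either it beats one of `a_1, …, a_M` (probability at most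
`M q → 0`), or each of `a_1, …, a_M` is beaten by a later member of `D`. The edges from
`a_1, …, a_M` to later alternatives other than `a_m` are independent of `D` and of each other, so
given `D` the second event has probability at most `(1 - (1 - q) ^ |D|) ^ M`. When `|D| < K` this
is at most `(1 - m ^ (-0.48)) ^ M ≤ exp (-m ^ 0.01)`, because `K q ≈ 0.468 log m`; and by a
Chernoff bound `P(|D| ≥ K) ≤ (2/3) ^ K E[(3/2) ^ |D|] ≤ (2/3) ^ K (1 + q/2) ^ n ≤ exp (-0.02 m q)`.
-/

open Finset Function

section Expectation

variable {m : ℕ} (p : Fin m → Fin m → ℝ)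

noncomputable def expectation (F : Orient m → ℝ) : ℝ := ∑ σ, prOf p σ * F σ

theorem expectation_prod_edges (t : Finset (Edges m)) (g : Edges m → Bool → ℝ) :
    expectation p (fun σ => ∏ e ∈ t, g e (σ e)) =
      ∏ e ∈ t, (p e.1.1 e.1.2 * g e true + (1 - p e.1.1 e.1.2) * g e false) := by
  let w : Edges m → Bool → ℝ := fun e b =>
    (if b = true then p e.1.1 e.1.2 else 1 - p e.1.1 e.1.2) * if e ∈ t then g e b else 1
  have hσ : ∀ σ : Orient m, prOf p σ * ∏ e ∈ t, g e (σ e) = ∏ e, w e (σ e) := fun σ => by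
    rw [prOf, ← Fintype.prod_ite_mem t, ← prod_mul_distrib]
  calc expectation p (fun σ => ∏ e ∈ t, g e (σ e))
      = ∏ e, ∑ b, w e b := by simp only [expectation, hσ, Fintype.prod_sum]
    _ = _ := by
      rw [← Fintype.prod_ite_mem t]
      refine prod_congr rfl fun e _ => ?_
      by_cases he : e ∈ t <;> simp [w, he]

theorem sum_prOf : ∑ σ, prOf p σ = 1 := by
  simpa [expectation] using expectation_prod_edges p ∅ (fun _ _ => 1)

theorem expectation_const (c : ℝ) : expectation p (fun _ => c) = c := by
  rw [expectation, ← sum_mul, sum_prOf, one_mul]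

theorem expectation_add (F G : Orient m → ℝ) :
    expectation p (fun σ => F σ + G σ) = expectation p F + expectation p G := by
  simp only [expectation, mul_add, sum_add_distrib]

theorem expectation_sub (F G : Orient m → ℝ) :
    expectation p (fun σ => F σ - G σ) = expectation p F - expectation p G := by
  simp only [expectation, mul_sub, sum_sub_distrib]

theorem expectation_const_mul (c : ℝ) (F : Orient m → ℝ) :
    expectation p (fun σ => c * F σ) = c * expectation p F := by
  simp only [expectation, mul_sum, mul_left_comm]

theorem expectation_sum {ι : Type*} (I : Finset ι) (F : ι → Orient m → ℝ) :
    expectation p (fun σ => ∑ i ∈ I, F i σ) = ∑ i ∈ I, expectation p (F i) := by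
  simp only [expectation, mul_sum]
  exact sum_comm

theorem expectation_mul_of_dependsOn {F G : Orient m → ℝ} {t : Set (Edges m)}
    (hF : DependsOn F t) (hG : DependsOn G tᶜ) :
    expectation p (fun σ => F σ * G σ) = expectation p F * expectation p G := by
  classical
  -- exchanging the coordinates in `t` of two independent samples preserves their joint weight
  let swap : Orient m × Orient m → Orient m × Orient m :=
    fun x => (t.piecewise x.1 x.2, t.piecewise x.2 x.1)
  have hswap : Involutive swap := fun x => by
    ext e <;> by_cases he : e ∈ t <;> simp [swap, he]
  have hweight : ∀ x, prOf p x.1 * prOf p x.2 = prOf p (swap x).1 * prOf p (swap x).2 := by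
    intro x
    simp only [prOf, ← prod_mul_distrib]
    refine prod_congr rfl fun e _ => ?_
    by_cases he : e ∈ t <;> simp [swap, he, mul_comm]
  have hvalue : ∀ x, F x.1 * G x.2 = F (swap x).1 * G (swap x).1 := fun x =>
    congr_arg₂ _ (hF fun e he => (Set.piecewise_eq_of_mem _ _ _ he).symm)
      (hG fun e he => (Set.piecewise_eq_of_notMem _ _ _ he).symm)
  calc expectation p (fun σ => F σ * G σ)
      = ∑ x : Orient m × Orient m, prOf p x.1 * prOf p x.2 * (F x.1 * G x.1) := by
        rw [Fintype.sum_prod_type, expectation]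
        refine sum_congr rfl fun σ _ => ?_
        dsimp only
        rw [← sum_mul, ← mul_sum, sum_prOf, mul_one]
    _ = ∑ x, prOf p (swap x).1 * prOf p (swap x).2 * (F (swap x).1 * G (swap x).1) :=
        (Equiv.sum_comp hswap.toPerm _).symm
    _ = ∑ x : Orient m × Orient m, prOf p x.1 * prOf p x.2 * (F x.1 * G x.2) :=
        sum_congr rfl fun x _ => by rw [← hweight, ← hvalue]
    _ = expectation p F * expectation p G := by
        rw [expectation, expectation, sum_mul_sum, Fintype.sum_prod_type]
        exact sum_congr rfl fun _ _ => sum_congr rfl fun _ _ => by ring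

theorem DependsOn.finset_prod {ι κ M : Type*} {α : κ → Type*} [CommMonoid M] {I : Finset ι}
    {F : ι → (∀ k, α k) → M} {t : ι → Set κ} (hF : ∀ i ∈ I, DependsOn (F i) (t i)) :
    DependsOn (fun σ => ∏ i ∈ I, F i σ) (⋃ i ∈ I, t i) := fun _ _ h =>
  prod_congr rfl fun i hi => hF i hi fun e he => h e (Set.mem_biUnion hi he)

theorem expectation_prod_of_dependsOn {ι : Type*} [DecidableEq ι] (I : Finset ι)
    {F : ι → Orient m → ℝ} {t : ι → Set (Edges m)} (ht : (I : Set ι).PairwiseDisjoint t)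
    (hF : ∀ i ∈ I, DependsOn (F i) (t i)) :
    expectation p (fun σ => ∏ i ∈ I, F i σ) = ∏ i ∈ I, expectation p (F i) := by
  induction I using Finset.induction_on with
  | empty => simpa using expectation_const p 1
  | insert a I ha ih =>
    have hrest : DependsOn (fun σ => ∏ i ∈ I, F i σ) (t a)ᶜ := by
      refine (DependsOn.finset_prod fun i hi => hF i (mem_insert_of_mem hi)).mono ?_
      refine Set.iUnion₂_subset fun i hi => Set.subset_compl_comm.1 ?_
      exact (ht (mem_insert_self a I) (mem_insert_of_mem hi)
        (by rintro rfl; exact ha hi)).subset_compl_right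
    simp only [prod_insert ha]
    rw [expectation_mul_of_dependsOn p (hF a (mem_insert_self a I)) hrest,
      ih (ht.subset (by simp)) fun i hi => hF i (mem_insert_of_mem hi)]

theorem expectation_comp_of_dependsOn {β : Type*} [Fintype β] [DecidableEq β]
    {D : Orient m → β} {Φ : β → Orient m → ℝ} {t : Set (Edges m)}
    (hD : DependsOn D t) (hΦ : ∀ b, DependsOn (Φ b) tᶜ) :
    expectation p (fun σ => Φ (D σ) σ) = expectation p (fun σ => expectation p (Φ (D σ))) := by
  have hsplit : ∀ Ψ : β → Orient m → ℝ, expectation p (fun σ => Ψ (D σ) σ) =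
      ∑ b, expectation p (fun σ => (if D σ = b then 1 else 0) * Ψ b σ) := fun Ψ => by
    rw [← expectation_sum]
    congr 1
    ext σ
    simp [ite_mul]
  rw [hsplit Φ, hsplit fun b _ => expectation p (Φ b)]
  refine sum_congr rfl fun b _ => ?_
  have hDb : DependsOn (fun σ => if D σ = b then (1 : ℝ) else 0) t := fun σ τ h => by
    simp only [hD h]
  rw [expectation_mul_of_dependsOn p hDb (hΦ b), expectation_mul_of_dependsOn p hDb
    ((dependsOn_const _).mono (Set.empty_subset _)), expectation_const]

theorem prOf_nonneg (hp : ∀ i j : Fin m, i < j → 0 ≤ p i j ∧ p i j ≤ 1) (σ : Orient m) :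
    0 ≤ prOf p σ :=
  prod_nonneg fun e _ => by split <;> linarith [hp _ _ e.2]

theorem expectation_mono (hp : ∀ i j : Fin m, i < j → 0 ≤ p i j ∧ p i j ≤ 1)
    {F G : Orient m → ℝ} (h : ∀ σ, F σ ≤ G σ) : expectation p F ≤ expectation p G :=
  sum_le_sum fun σ _ => mul_le_mul_of_nonneg_left (h σ) (prOf_nonneg p hp σ)

theorem Pr_eq_expectation (E : Set (Orient m)) : Pr p E = expectation p (E.indicator 1) :=
  sum_congr rfl fun σ _ => by by_cases h : σ ∈ E <;> simp [h]

theorem Pr_nonneg (hp : ∀ i j : Fin m, i < j → 0 ≤ p i j ∧ p i j ≤ 1) (E : Set (Orient m)) :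
    0 ≤ Pr p E :=
  sum_nonneg fun σ _ => Set.indicator_nonneg (fun σ _ => prOf_nonneg p hp σ) σ

end Expectation

def IsKing {m : ℕ} (σ : Orient m) (v : Fin m) : Prop :=
  ∀ j, j ≠ v → beats σ v j ∨ ∃ l, beats σ v l ∧ beats σ l j

section LastAlternative

variable {n : ℕ}

def toLast (j : Fin n) : Edges (n + 1) := ⟨(j.castSucc, Fin.last n), j.castSucc_lt_last⟩

def lastOut (σ : Orient (n + 1)) : Finset (Fin n) := {l | σ (toLast l) = false}

def edgesToLater (j : Fin n) (S : Finset (Fin n)) : Finset (Edges (n + 1)) :=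
  {e | e.1.1 = j.castSucc ∧ ∃ l ∈ S, e.1.2 = l.castSucc}

theorem exists_of_beats_last {σ : Orient (n + 1)} {y : Fin (n + 1)}
    (h : beats σ (Fin.last n) y) : ∃ l : Fin n, y = l.castSucc ∧ σ (toLast l) = false := by
  rcases h with ⟨hlt, -⟩ | ⟨hlt, hσ⟩
  · exact absurd hlt (Fin.le_last y).not_gt
  · exact ⟨y.castPred hlt.ne, (y.castSucc_castPred _).symm, by simpa [toLast] using hσ⟩

theorem IsKing.last_cases {σ : Orient (n + 1)} (hσ : IsKing σ (Fin.last n)) (b : Fin n) :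
    (∃ j < b, σ (toLast j) = false) ∨
      ∀ j < b, ∃ e ∈ edgesToLater j (lastOut σ), σ e = false := by
  refine or_iff_not_imp_left.2 fun hA j hj => ?_
  push Not at hA
  rcases hσ j.castSucc j.castSucc_lt_last.ne with hdirect | ⟨y, hy, hyj⟩
  · obtain ⟨l, hl, hσl⟩ := exists_of_beats_last hdirect
    obtain rfl := Fin.castSucc_injective n hl.symm
    exact absurd hσl (hA l hj)
  · obtain ⟨l, rfl, hσl⟩ := exists_of_beats_last hy
    rcases hyj with ⟨hlj, -⟩ | ⟨hjl, hσjl⟩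
    · exact absurd hσl (hA l ((Fin.castSucc_lt_castSucc_iff.1 hlj).trans hj))
    · exact ⟨⟨_, hjl⟩, by simp [edgesToLater, lastOut, hσl], hσjl⟩

theorem toLast_injective : Injective (toLast (n := n)) := fun _ _ h =>
  Fin.castSucc_injective n (congr_arg (fun e : Edges (n + 1) => e.1.1) h)

theorem dependsOn_lastOut : DependsOn (lastOut (n := n)) (Set.range toLast) := fun σ τ h => by
  ext l
  simp [lastOut, h (toLast l) ⟨l, rfl⟩]

theorem edgesToLater_subset_compl_range (j : Fin n) (S : Finset (Fin n)) :
    (edgesToLater j S : Set (Edges (n + 1))) ⊆ (Set.range toLast)ᶜ := by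
  rintro e he ⟨l', rfl⟩
  obtain ⟨-, l, -, hl⟩ := by simpa [edgesToLater] using he
  exact (Fin.castSucc_lt_last l).ne (by simpa [toLast] using hl.symm)

theorem pairwiseDisjoint_edgesToLater (J : Set (Fin n)) (S : Finset (Fin n)) :
    J.PairwiseDisjoint fun j => (edgesToLater j S : Set (Edges (n + 1))) := by
  intro j _ j' _ hne
  refine Set.disjoint_left.2 fun e he he' => hne (Fin.castSucc_injective n ?_)
  simp only [edgesToLater, coe_filter, Set.mem_ofPred_eq, mem_univ, true_and] at he he'
  rw [← he.1, ← he'.1]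

theorem card_edgesToLater_le (j : Fin n) (S : Finset (Fin n)) : #(edgesToLater j S) ≤ #S := by
  rw [← card_map Fin.castSuccEmb]
  refine card_le_card_of_injOn (fun e => e.1.2) (fun e he => ?_) fun e he e' he' h => ?_
  · obtain ⟨-, l, hl, hle⟩ := by simpa [edgesToLater] using he
    exact mem_map.2 ⟨l, hl, hle.symm⟩
  · simp only [edgesToLater, coe_filter, Set.mem_ofPred_eq, mem_univ, true_and] at he he'
    exact Subtype.ext (Prod.ext (he.1.trans he'.1.symm) h)

variable (p : Fin (n + 1) → Fin (n + 1) → ℝ)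

theorem expectation_toLast_eq_false (j : Fin n) :
    expectation p (fun σ => if σ (toLast j) = false then 1 else 0) =
      1 - p j.castSucc (Fin.last n) := by
  have h := expectation_prod_edges p {toLast j} fun _ b => if b = false then (1 : ℝ) else 0
  simp only [prod_singleton] at h
  rw [h]
  simp [toLast]

theorem expectation_prod_one_sub_prod_edgesToLater (b : Fin n) (S : Finset (Fin n)) :
    expectation p (fun σ => ∏ j ∈ Iio b,
        (1 - ∏ e ∈ edgesToLater j S, if σ e = true then 1 else 0)) =
      ∏ j ∈ Iio b, (1 - ∏ e ∈ edgesToLater j S, p e.1.1 e.1.2) := by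
  rw [expectation_prod_of_dependsOn p _ (pairwiseDisjoint_edgesToLater _ S)]
  · refine prod_congr rfl fun j _ => ?_
    rw [expectation_sub, expectation_const]
    have h := expectation_prod_edges p (edgesToLater j S)
      fun _ b => if b = true then (1 : ℝ) else 0
    simp only at h
    rw [h]
    simp
  · intro j _ σ τ h
    exact congr_arg (1 - ·) (prod_congr rfl fun e he => by rw [h e he])

theorem expectation_prod_one_sub_prod_edgesToLater_lastOut (b : Fin n) :
    expectation p (fun σ => ∏ j ∈ Iio b,
        (1 - ∏ e ∈ edgesToLater j (lastOut σ), if σ e = true then 1 else 0)) =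
      expectation p (fun σ =>
        ∏ j ∈ Iio b, (1 - ∏ e ∈ edgesToLater j (lastOut σ), p e.1.1 e.1.2)) := by
  rw [expectation_comp_of_dependsOn p (Φ := fun S σ => ∏ j ∈ Iio b,
    (1 - ∏ e ∈ edgesToLater j S, if σ e = true then 1 else 0)) dependsOn_lastOut]
  · simp only [expectation_prod_one_sub_prod_edgesToLater]
  · intro S σ τ h
    refine prod_congr rfl fun j _ => congr_arg _ (prod_congr rfl fun e he => ?_)
    rw [h e (edgesToLater_subset_compl_range j S he)]

theorem expectation_three_halves_pow_card_lastOut {q : ℝ}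
    (hp : ∀ i j : Fin (n + 1), i < j → 0 ≤ p i j ∧ p i j ≤ 1)
    (hq : ∀ i j : Fin (n + 1), i < j → 1 - p i j ≤ q) :
    expectation p (fun σ => (3 / 2 : ℝ) ^ #(lastOut σ)) ≤ (1 + q / 2) ^ n := by
  have hpow : ∀ σ : Orient (n + 1), (3 / 2 : ℝ) ^ #(lastOut σ) =
      ∏ e ∈ univ.map ⟨toLast, toLast_injective⟩, if σ e = false then 3 / 2 else 1 := fun σ => by
    rw [prod_map, ← prod_filter, prod_const]
    rfl
  have h := expectation_prod_edges p (univ.map ⟨toLast, toLast_injective⟩)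
    fun _ b => if b = false then (3 / 2 : ℝ) else 1
  simp only at h
  simp only [hpow]
  rw [h, prod_map]
  calc ∏ l : Fin n, _ ≤ ∏ _l : Fin n, (1 + q / 2) :=
        prod_le_prod (fun l _ => ?_) fun l _ => ?_
    _ = (1 + q / 2) ^ n := by simp
  · simp only [Embedding.coeFn_mk, Bool.true_eq_false, if_true, if_false]
    linarith [hp _ _ (toLast l).2]
  · simp only [Embedding.coeFn_mk, Bool.true_eq_false, if_true, if_false]
    linarith [hq _ _ (toLast l).2]

theorem prod_one_sub_prod_edgesToLater_le {q : ℝ} (hq0 : 0 ≤ q) (hq1 : q ≤ 1)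
    (hp : ∀ i j : Fin (n + 1), i < j → 0 ≤ p i j ∧ p i j ≤ 1)
    (hq : ∀ i j : Fin (n + 1), i < j → 1 - p i j ≤ q) (b : Fin n) (S : Finset (Fin n)) :
    ∏ j ∈ Iio b, (1 - ∏ e ∈ edgesToLater j S, p e.1.1 e.1.2) ≤ (1 - (1 - q) ^ #S) ^ (b : ℕ) := by
  have hlower : ∀ j, (1 - q) ^ #S ≤ ∏ e ∈ edgesToLater j S, p e.1.1 e.1.2 := fun j =>
    calc (1 - q) ^ #S ≤ (1 - q) ^ #(edgesToLater j S) :=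
          pow_le_pow_of_le_one (by linarith) (by linarith) (card_edgesToLater_le j S)
      _ = ∏ _e ∈ edgesToLater j S, (1 - q) := (prod_const _).symm
      _ ≤ _ := prod_le_prod (fun _ _ => by linarith) fun e _ => by linarith [hq _ _ e.2]
  have hupper : ∀ j, ∏ e ∈ edgesToLater j S, p e.1.1 e.1.2 ≤ 1 := fun j =>
    prod_le_one (fun e _ => (hp _ _ e.2).1) fun e _ => (hp _ _ e.2).2
  calc ∏ j ∈ Iio b, (1 - ∏ e ∈ edgesToLater j S, p e.1.1 e.1.2)
      ≤ ∏ _j ∈ Iio b, (1 - (1 - q) ^ #S) :=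
        prod_le_prod (fun j _ => sub_nonneg.2 (hupper j)) fun j _ => by linarith [hlower j]
    _ = (1 - (1 - q) ^ #S) ^ (b : ℕ) := by rw [prod_const, Fin.card_Iio]

theorem one_sub_one_sub_pow_pow_le {q : ℝ} (hq0 : 0 ≤ q) (hq1 : q ≤ 1) (k K M : ℕ) :
    (1 - (1 - q) ^ k) ^ M ≤ (1 - (1 - q) ^ K) ^ M + (2 / 3) ^ K * (3 / 2) ^ k := by
  have hbase : ∀ k : ℕ, 0 ≤ 1 - (1 - q) ^ k ∧ 1 - (1 - q) ^ k ≤ 1 := fun k =>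
    ⟨sub_nonneg.2 (pow_le_one₀ (by linarith) (by linarith)),
      by linarith [pow_nonneg (by linarith : 0 ≤ 1 - q) k]⟩
  rcases le_or_gt k K with hkK | hKk
  · have hmono : (1 - (1 - q) ^ k) ^ M ≤ (1 - (1 - q) ^ K) ^ M :=
      pow_le_pow_left₀ (hbase k).1
        (by linarith [pow_le_pow_of_le_one (by linarith : 0 ≤ 1 - q) (by linarith) hkK]) M
    linarith [show (0 : ℝ) ≤ (2 / 3) ^ K * (3 / 2) ^ k by positivity]
  · have hweight : 1 ≤ (2 / 3 : ℝ) ^ K * (3 / 2) ^ k :=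
      calc (1 : ℝ) = (2 / 3) ^ K * (3 / 2) ^ K := by rw [← mul_pow]; norm_num
        _ ≤ (2 / 3) ^ K * (3 / 2) ^ k := by gcongr; norm_num
    linarith [pow_le_one₀ (hbase k).1 (hbase k).2 (n := M), pow_nonneg (hbase K).1 M]

theorem indicator_isKing_last_le (σ : Orient (n + 1)) (b : Fin n) :
    {σ | IsKing σ (Fin.last n)}.indicator (1 : Orient (n + 1) → ℝ) σ ≤
      ∑ j ∈ Iio b, (if σ (toLast j) = false then 1 else 0) +
        ∏ j ∈ Iio b, (1 - ∏ e ∈ edgesToLater j (lastOut σ), if σ e = true then 1 else 0) := by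
  have hsum : 0 ≤ ∑ j ∈ Iio b, (if σ (toLast j) = false then (1 : ℝ) else 0) :=
    sum_nonneg fun _ _ => by positivity
  have hprod : 0 ≤ ∏ j ∈ Iio b,
      (1 - ∏ e ∈ edgesToLater j (lastOut σ), if σ e = true then (1 : ℝ) else 0) :=
    prod_nonneg fun _ _ => sub_nonneg.2 <|
      prod_le_one (fun _ _ => by positivity) fun _ _ => by split <;> norm_num
  by_cases hσ : IsKing σ (Fin.last n)
  · rw [Set.indicator_of_mem hσ, Pi.one_apply]
    rcases hσ.last_cases b with ⟨j, hj, hσj⟩ | hcover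
    · have := single_le_sum (fun j _ => by positivity) (mem_Iio.2 hj) (f := fun j =>
        if σ (toLast j) = false then (1 : ℝ) else 0)
      simp only [hσj, if_true] at this
      linarith
    · have : ∏ j ∈ Iio b,
          (1 - ∏ e ∈ edgesToLater j (lastOut σ), if σ e = true then (1 : ℝ) else 0) = 1 := by
        refine prod_eq_one fun j hj => ?_
        obtain ⟨e, he, hσe⟩ := hcover j (mem_Iio.1 hj)
        rw [prod_eq_zero he (by simp [hσe]), sub_zero]
      linarith
  · rw [Set.indicator_of_notMem hσ]
    exact add_nonneg hsum hprod

theorem Pr_isKing_last_le {q : ℝ} (hq0 : 0 ≤ q) (hq1 : q ≤ 1)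
    (hp : ∀ i j : Fin (n + 1), i < j → 0 ≤ p i j ∧ p i j ≤ 1)
    (hq : ∀ i j : Fin (n + 1), i < j → 1 - p i j ≤ q) (b : Fin n) (K : ℕ) :
    Pr p {σ | IsKing σ (Fin.last n)} ≤
      b * q + ((1 - (1 - q) ^ K) ^ (b : ℕ) + (2 / 3) ^ K * (1 + q / 2) ^ n) := by
  rw [Pr_eq_expectation]
  refine (expectation_mono p hp fun σ => indicator_isKing_last_le σ b).trans ?_
  rw [expectation_add, expectation_sum, expectation_prod_one_sub_prod_edgesToLater_lastOut]
  simp only [expectation_toLast_eq_false]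
  gcongr
  · calc ∑ j ∈ Iio b, (1 - p j.castSucc (Fin.last n)) ≤ ∑ _j ∈ Iio b, q :=
          sum_le_sum fun j _ => hq _ _ (toLast j).2
      _ = b * q := by rw [sum_const, Fin.card_Iio, nsmul_eq_mul]
  · calc _ ≤ expectation p (fun σ =>
          (1 - (1 - q) ^ K) ^ (b : ℕ) + (2 / 3) ^ K * (3 / 2) ^ #(lastOut σ)) :=
          expectation_mono p hp fun σ =>
            (prod_one_sub_prod_edgesToLater_le p hq0 hq1 hp hq b _).trans
              (one_sub_one_sub_pow_pow_le hq0 hq1 _ K b)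
      _ ≤ _ := by
          rw [expectation_add, expectation_const, expectation_const_mul]
          gcongr
          exact expectation_three_halves_pow_card_lastOut p hp hq

end LastAlternative

section Asymptotics

open Filter Real Topology

-- `q`, `M` and `K` for `m` alternatives
noncomputable def edgeBound (m : ℕ) : ℝ := 0.6 * √(log m / m)

noncomputable def coverSize (m : ℕ) : ℕ := ⌈(m : ℝ) ^ (0.49 : ℝ)⌉₊

noncomputable def degreeCap (m : ℕ) : ℕ := ⌈1.3 * m * edgeBound m⌉₊

theorem edgeBound_nonneg (m : ℕ) : 0 ≤ edgeBound m := by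
  unfold edgeBound
  positivity

theorem sq_edgeBound (m : ℕ) : edgeBound m ^ 2 = 0.36 * (log m / m) := by
  rw [edgeBound, mul_pow, sq_sqrt (div_nonneg (log_natCast_nonneg m) m.cast_nonneg)]
  norm_num

theorem tendsto_edgeBound : Tendsto edgeBound atTop (𝓝 0) := by
  have h : Tendsto (fun m : ℕ => log m / (m : ℝ)) atTop (𝓝 0) := by
    simpa [Function.comp_def] using
      (isLittleO_log_rpow_atTop one_pos).tendsto_div_nhds_zero.comp tendsto_natCast_atTop_atTop
  have h' := h.sqrt.const_mul 0.6
  rwa [sqrt_zero, mul_zero] at h'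

theorem natCast_mul_edgeBound (m : ℕ) : m * edgeBound m = 0.6 * √(m * log m) := by
  rcases m.eq_zero_or_pos with rfl | hm
  · simp
  have hm' : (0 : ℝ) < m := by exact_mod_cast hm
  rw [edgeBound, mul_left_comm, ← sqrt_sq hm'.le, ← sqrt_mul (sq_nonneg _), sqrt_sq hm'.le]
  congr 2
  field_simp

theorem tendsto_natCast_mul_edgeBound : Tendsto (fun m : ℕ => m * edgeBound m) atTop atTop := by
  simp only [natCast_mul_edgeBound]
  exact (tendsto_sqrt_atTop.comp (tendsto_natCast_atTop_atTop.atTop_mul_atTop₀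
    (tendsto_log_atTop.comp tendsto_natCast_atTop_atTop))).const_mul_atTop (by norm_num)

theorem coverSize_le (m : ℕ) (hm : 1 ≤ m) : (coverSize m : ℝ) ≤ 2 * (m : ℝ) ^ (0.49 : ℝ) := by
  have h1 : (1 : ℝ) ≤ (m : ℝ) ^ (0.49 : ℝ) := one_le_rpow (by exact_mod_cast hm) (by norm_num)
  unfold coverSize
  linarith [Nat.ceil_lt_add_one (zero_le_one.trans h1)]

theorem tendsto_coverSize_mul_edgeBound :
    Tendsto (fun m => (coverSize m : ℝ) * edgeBound m) atTop (𝓝 0) := by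
  have hlim : Tendsto (fun x : ℝ => 1.2 * (log x ^ (1 / 2 : ℝ) / x ^ (0.01 : ℝ))) atTop (𝓝 0) := by
    simpa using ((isLittleO_log_rpow_rpow_atTop (1 / 2) (by norm_num : (0 : ℝ) < 0.01)
      ).tendsto_div_nhds_zero).const_mul 1.2
  refine squeeze_zero' (.of_forall fun m => mul_nonneg (coverSize m).cast_nonneg
    (edgeBound_nonneg m)) ?_ (hlim.comp tendsto_natCast_atTop_atTop)
  filter_upwards [eventually_ge_atTop 1] with m hm
  have hx : (0 : ℝ) < m := by exact_mod_cast hm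
  have hsplit : (m : ℝ) ^ (1 / 2 : ℝ) = (m : ℝ) ^ (0.49 : ℝ) * (m : ℝ) ^ (0.01 : ℝ) := by
    rw [← rpow_add hx]
    norm_num
  calc (coverSize m : ℝ) * edgeBound m ≤ 2 * (m : ℝ) ^ (0.49 : ℝ) * edgeBound m :=
        mul_le_mul_of_nonneg_right (coverSize_le m hm) (edgeBound_nonneg m)
    _ = 1.2 * (log m ^ (1 / 2 : ℝ) / (m : ℝ) ^ (0.01 : ℝ)) := by
        rw [edgeBound, sqrt_div' _ hx.le, sqrt_eq_rpow, sqrt_eq_rpow, hsplit]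
        field_simp
        ring

theorem two_fifths_le_log_three_halves : (2 / 5 : ℝ) ≤ log (3 / 2) := by
  rw [le_log_iff_exp_le (by norm_num)]
  have he : exp 2 ≤ (3 / 2 : ℝ) ^ 5 := by
    have h := exp_one_lt_d9
    rw [show (2 : ℝ) = 1 + 1 by norm_num, exp_add]
    nlinarith [exp_pos 1]
  refine le_of_pow_le_pow_left₀ (n := 5) (by norm_num) (by norm_num) ?_
  rwa [← exp_nat_mul, show ((5 : ℕ) : ℝ) * (2 / 5) = 2 by norm_num]

theorem two_thirds_pow_le (k : ℕ) : (2 / 3 : ℝ) ^ k ≤ exp (-(2 / 5 * k)) := by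
  have h : (2 / 3 : ℝ) ≤ exp (-(2 / 5)) := by
    rw [← exp_log (by norm_num : (0 : ℝ) < 2 / 3), exp_le_exp,
      show (2 / 3 : ℝ) = (3 / 2)⁻¹ by norm_num, log_inv]
    linarith [two_fifths_le_log_three_halves]
  rw [neg_mul_eq_neg_mul, mul_comm, exp_nat_mul]
  exact pow_le_pow_left₀ (by norm_num) h k

theorem two_thirds_pow_degreeCap_mul_le (m : ℕ) :
    (2 / 3 : ℝ) ^ degreeCap m * (1 + edgeBound m / 2) ^ m ≤
      exp (-(0.02 * (m * edgeBound m))) := by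
  have hK : 1.3 * m * edgeBound m ≤ degreeCap m := Nat.le_ceil _
  have hpow : (1 + edgeBound m / 2) ^ m ≤ exp (m * (edgeBound m / 2)) := by
    rw [exp_nat_mul]
    exact pow_le_pow_left₀ (by linarith [edgeBound_nonneg m])
      (by linarith [add_one_le_exp (edgeBound m / 2)]) m
  calc (2 / 3 : ℝ) ^ degreeCap m * (1 + edgeBound m / 2) ^ m
      ≤ exp (-(2 / 5 * degreeCap m)) * exp (m * (edgeBound m / 2)) :=
        mul_le_mul (two_thirds_pow_le _) hpow
          (pow_nonneg (by linarith [edgeBound_nonneg m]) _) (exp_pos _).le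
    _ ≤ exp (-(0.02 * (m * edgeBound m))) := by
        rw [← exp_add, exp_le_exp]
        linarith

theorem tendsto_two_thirds_pow_mul_one_add_pow :
    Tendsto (fun m => (2 / 3 : ℝ) ^ degreeCap m * (1 + edgeBound m / 2) ^ m) atTop (𝓝 0) :=
  squeeze_zero (fun m => mul_nonneg (by positivity)
      (pow_nonneg (by linarith [edgeBound_nonneg m]) _)) two_thirds_pow_degreeCap_mul_le <|
    tendsto_exp_atBot.comp <| tendsto_neg_atTop_atBot.comp <|
      tendsto_natCast_mul_edgeBound.const_mul_atTop (by norm_num)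

theorem exp_neg_le_one_sub_pow {q : ℝ} (hq0 : 0 ≤ q) (hq1 : q < 1) (k : ℕ) :
    exp (-(k * (q / (1 - q)))) ≤ (1 - q) ^ k := by
  have h : exp (-(q / (1 - q))) ≤ 1 - q := by
    have h1q : 0 < 1 - q := by linarith
    calc exp (-(q / (1 - q))) = (exp (q / (1 - q)))⁻¹ := exp_neg _
      _ ≤ (q / (1 - q) + 1)⁻¹ := inv_anti₀ (by positivity) (add_one_le_exp _)
      _ = 1 - q := by field_simp; ring
  rw [← mul_neg, exp_nat_mul]
  exact pow_le_pow_left₀ (exp_pos _).le h k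

theorem rpow_le_coverSize_mul (m : ℕ) (hm : 1 ≤ log m) (hq : edgeBound m ≤ 0.003) :
    (m : ℝ) ^ (0.01 : ℝ) ≤ coverSize m * (1 - edgeBound m) ^ degreeCap m := by
  set q := edgeBound m
  have hq0 : 0 ≤ q := edgeBound_nonneg m
  have hx : (0 : ℝ) < m := Nat.cast_pos.2 (Nat.pos_of_ne_zero (by rintro rfl; norm_num at hm))
  have hK : (degreeCap m : ℝ) < 1.3 * m * q + 1 := Nat.ceil_lt_add_one (by positivity)
  have hmq2 : m * q ^ 2 = 0.36 * log m := by
    rw [sq_edgeBound]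
    field_simp
  -- `degreeCap m * q ≈ 1.3 * 0.36 * log m`, and `0.468 < 0.49`, the exponent of `coverSize m`
  have hexp : degreeCap m * (q / (1 - q)) ≤ 0.48 * log m := by
    rw [mul_div_assoc', div_le_iff₀ (by linarith)]
    nlinarith [mul_le_mul_of_nonneg_right hK.le hq0]
  have hcover : (m : ℝ) ^ (0.49 : ℝ) ≤ coverSize m := Nat.le_ceil _
  calc (m : ℝ) ^ (0.01 : ℝ) = (m : ℝ) ^ (0.49 : ℝ) * exp (-(0.48 * log m)) := by
        rw [show exp (-(0.48 * log m)) = (m : ℝ) ^ (-0.48 : ℝ) by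
          rw [rpow_def_of_pos hx]; ring_nf, ← rpow_add hx]
        norm_num
    _ ≤ coverSize m * (1 - q) ^ degreeCap m :=
        mul_le_mul hcover ((exp_le_exp.2 (neg_le_neg hexp)).trans
          (exp_neg_le_one_sub_pow hq0 (by linarith) _)) (exp_pos _).le (by positivity)

theorem eventually_edgeBound_le : ∀ᶠ m in atTop, edgeBound m ≤ 0.003 :=
  tendsto_edgeBound.eventually (ge_mem_nhds (by norm_num))

theorem eventually_one_le_log : ∀ᶠ m : ℕ in atTop, 1 ≤ log m :=
  (tendsto_log_atTop.comp tendsto_natCast_atTop_atTop).eventually_ge_atTop 1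

theorem tendsto_one_sub_one_sub_pow_pow :
    Tendsto (fun m => (1 - (1 - edgeBound m) ^ degreeCap m) ^ coverSize m) atTop (𝓝 0) := by
  have hlim : Tendsto (fun m : ℕ => exp (-(m : ℝ) ^ (0.01 : ℝ))) atTop (𝓝 0) :=
    tendsto_exp_atBot.comp <| tendsto_neg_atTop_atBot.comp <|
      (tendsto_rpow_atTop (by norm_num)).comp tendsto_natCast_atTop_atTop
  have hbase : ∀ᶠ m in atTop, 0 ≤ 1 - (1 - edgeBound m) ^ degreeCap m :=
    eventually_edgeBound_le.mono fun m hq =>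
      sub_nonneg.2 (pow_le_one₀ (by linarith) (by linarith [edgeBound_nonneg m]))
  refine squeeze_zero' (hbase.mono fun m h => pow_nonneg h _) ?_ hlim
  filter_upwards [hbase, eventually_edgeBound_le, eventually_one_le_log] with m h0 hq hm
  calc (1 - (1 - edgeBound m) ^ degreeCap m) ^ coverSize m
      ≤ exp (-(1 - edgeBound m) ^ degreeCap m) ^ coverSize m :=
        pow_le_pow_left₀ h0 (one_sub_le_exp_neg _) _
    _ = exp (-(coverSize m * (1 - edgeBound m) ^ degreeCap m)) := by
        rw [← exp_nat_mul, mul_neg]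
    _ ≤ exp (-(m : ℝ) ^ (0.01 : ℝ)) :=
        exp_le_exp.2 (neg_le_neg (rpow_le_coverSize_mul m hm hq))

theorem coverSize_lt {n : ℕ} (hn : 8 ≤ n) : coverSize (n + 1) < n := by
  have hx : (9 : ℝ) ≤ (n + 1 : ℕ) := by exact_mod_cast Nat.succ_le_succ hn
  have hsqrt : (3 : ℝ) ≤ √((n + 1 : ℕ) : ℝ) := (le_sqrt' (by norm_num)).2 (by linarith)
  have hrpow : ((n + 1 : ℕ) : ℝ) ^ (0.49 : ℝ) ≤ ((n + 1 : ℕ) : ℝ) / 3 :=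
    calc ((n + 1 : ℕ) : ℝ) ^ (0.49 : ℝ) ≤ ((n + 1 : ℕ) : ℝ) ^ (1 / 2 : ℝ) :=
          rpow_le_rpow_of_exponent_le (by linarith) (by norm_num)
      _ = √((n + 1 : ℕ) : ℝ) := (sqrt_eq_rpow _).symm
      _ ≤ ((n + 1 : ℕ) : ℝ) / 3 := by
          nlinarith [mul_self_sqrt (by linarith : (0 : ℝ) ≤ (n + 1 : ℕ))]
  have hceil : (coverSize (n + 1) : ℝ) < ((n + 1 : ℕ) : ℝ) ^ (0.49 : ℝ) + 1 :=
    Nat.ceil_lt_add_one (by positivity)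
  have hlt : (coverSize (n + 1) : ℝ) < n := by push_cast at hx hceil hrpow ⊢; linarith
  exact_mod_cast hlt

noncomputable def kingBound (m : ℕ) : ℝ :=
  coverSize m * edgeBound m + ((1 - (1 - edgeBound m) ^ degreeCap m) ^ coverSize m +
    (2 / 3) ^ degreeCap m * (1 + edgeBound m / 2) ^ m)

theorem tendsto_kingBound : Tendsto kingBound atTop (𝓝 0) := by
  have h := tendsto_coverSize_mul_edgeBound.add
    (tendsto_one_sub_one_sub_pow_pow.add tendsto_two_thirds_pow_mul_one_add_pow)
  rwa [add_zero, add_zero] at h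

end Asymptotics

/-- if, for `i > j`, the edge `a_i → a_j` appears with probability at most
`0.6·√(log n / n)` (in our encoding: `1 - p i j ≤ 0.6·√(log n / n)` for `i < j`), then the
probability that the last alternative `a_n` is a king (reaches every other alternative by a
directed path of length at most two) tends to `0`; hence w.h.p. `UC(T) ≠ A`. -/
theorem stmt13 (p : ∀ n : ℕ, Fin n → Fin n → ℝ)
    (hp01 : ∀ n : ℕ, ∀ i j : Fin n, i < j → 0 ≤ p n i j ∧ p n i j ≤ 1)
    (hp : ∀ n : ℕ, ∀ i j : Fin n, i < j →
      1 - p n i j ≤ 0.6 * Real.sqrt (Real.log n / n)) :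
    Filter.Tendsto
      (fun n : ℕ => Pr (p (n + 1)) {σ : Orient (n + 1) | ∀ j : Fin (n + 1),
        j ≠ Fin.last n → beats σ (Fin.last n) j ∨
          ∃ l : Fin (n + 1), beats σ (Fin.last n) l ∧ beats σ l j})
      Filter.atTop (nhds 0) := by
  refine squeeze_zero' (.of_forall fun n => Pr_nonneg _ (hp01 _) _) ?_
    (tendsto_kingBound.comp (Filter.tendsto_add_atTop_nat 1))
  filter_upwards [(Filter.tendsto_add_atTop_nat 1).eventually eventually_edgeBound_le,
    Filter.eventually_ge_atTop 8] with n hq hn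
  have hq0 := edgeBound_nonneg (n + 1)
  calc Pr (p (n + 1)) {σ | IsKing σ (Fin.last n)}
      ≤ _ := Pr_isKing_last_le _ hq0 (by linarith) (hp01 _) (hp _) ⟨_, coverSize_lt hn⟩ _
    _ ≤ kingBound (n + 1) := by
        unfold kingBound
        gcongr
        · linarith
        · omega
end

section
/- Fix an odd number k of voters and a pair of alternatives. If each of k independent voters prefers alternative a to alternative b with probability at least q (and q ≤ 1/2), then the probability that a strict majority of the voters prefer a to b is at least C(k, (k+1)/2) · q^{(k+1)/2} · (1 − q)^{(k−1)/2}. In particular, if q ≥ c·(log n / n)^{1/(k+1)} with c > √2 and n ≥ (2c)^{2k+2}, this majority probability is at least c·√(log n / n). -/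
/-!
The probability of an up-set of outcomes under independent coordinates is monotone in the
success probability of each coordinate: as a function of one coordinate's probability it is
affine, with nonnegative slope because setting that coordinate to `true` maps the outcomes of the
up-set where it is `false` injectively into those where it is `true`, without changing the weight
of the other coordinates. So every `qv v` may be lowered to `q`, and then only the outcomes with
exactly `(k + 1) / 2` votes for `a` are kept. For the second bound,
`q ^ ((k + 1) / 2) ≥ c ^ ((k + 1) / 2) * √(log n / n)`, `1 - q ≥ 1 / 2` and
`C(2j + 1, j + 1) ≥ C(2j, j) ≥ 2 ^ j`.
-/

open Finset

section ProductBernoulli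

variable {ι : Type*} [Fintype ι]

def outcomeWeight (p : ι → ℝ) (ω : ι → Bool) : ℝ :=
  ∏ v, if ω v then p v else 1 - p v

def eventProb (p : ι → ℝ) (S : Finset (ι → Bool)) : ℝ :=
  ∑ ω ∈ S, outcomeWeight p ω

lemma outcomeWeight_nonneg {p : ι → ℝ} (hp0 : ∀ v, 0 ≤ p v) (hp1 : ∀ v, p v ≤ 1)
    (ω : ι → Bool) : 0 ≤ outcomeWeight p ω :=
  prod_nonneg fun v _ => by split <;> linarith [hp0 v, hp1 v]

lemma outcomeWeight_const (q : ℝ) (ω : ι → Bool) :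
    outcomeWeight (fun _ => q) ω
      = q ^ #{v | ω v} * (1 - q) ^ (Fintype.card ι - #{v | ω v}) := by
  rw [outcomeWeight, prod_ite, prod_const, prod_const, ← card_univ,
    ← card_filter_add_card_filter_not (s := univ) (fun v => ω v), Nat.add_sub_cancel_left]

variable [DecidableEq ι]

def outcomeWeightOff (p : ι → ℝ) (v : ι) (ω : ι → Bool) : ℝ :=
  ∏ w ∈ univ.erase v, if ω w then p w else 1 - p w

lemma outcomeWeightOff_nonneg {p : ι → ℝ} (hp0 : ∀ w, 0 ≤ p w) (hp1 : ∀ w, p w ≤ 1)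
    (v : ι) (ω : ι → Bool) : 0 ≤ outcomeWeightOff p v ω :=
  prod_nonneg fun w _ => by split <;> linarith [hp0 w, hp1 w]

lemma outcomeWeightOff_update_self (p : ι → ℝ) (v : ι) (ω : ι → Bool) (b : Bool) :
    outcomeWeightOff p v (Function.update ω v b) = outcomeWeightOff p v ω :=
  prod_congr rfl fun w hw => by rw [Function.update_of_ne (ne_of_mem_erase hw)]

lemma outcomeWeight_update (p : ι → ℝ) (v : ι) (z : ℝ) (ω : ι → Bool) :
    outcomeWeight (Function.update p v z) ω
      = (if ω v then z else 1 - z) * outcomeWeightOff p v ω := by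
  rw [outcomeWeight, ← mul_prod_erase univ _ (mem_univ v), Function.update_self]
  congr 1
  exact prod_congr rfl fun w hw => by rw [Function.update_of_ne (ne_of_mem_erase hw)]

lemma eventProb_update (p : ι → ℝ) (v : ι) (z : ℝ) (S : Finset (ι → Bool)) :
    eventProb (Function.update p v z) S
      = z * ∑ ω ∈ S with ω v, outcomeWeightOff p v ω
        + (1 - z) * ∑ ω ∈ S with ¬ω v, outcomeWeightOff p v ω := by
  rw [eventProb, ← sum_filter_add_sum_filter_not S (fun ω => ω v), mul_sum, mul_sum]
  congr 1 <;> refine sum_congr rfl fun ω hω => ?_ <;>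
    simp [outcomeWeight_update, (mem_filter.1 hω).2]

lemma sum_outcomeWeightOff_not_le {S : Finset (ι → Bool)}
    (hS : IsUpperSet (S : Set (ι → Bool))) {p : ι → ℝ} (hp0 : ∀ w, 0 ≤ p w)
    (hp1 : ∀ w, p w ≤ 1) (v : ι) :
    ∑ ω ∈ S with ¬ω v, outcomeWeightOff p v ω
      ≤ ∑ ω ∈ S with ω v, outcomeWeightOff p v ω := by
  set raise : (ι → Bool) → ι → Bool := fun ω => Function.update ω v true
  have hinj : Set.InjOn raise ↑(S.filter fun ω => ¬ω v) := by
    intro ω hω ω' hω' h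
    simp only [coe_filter, Bool.not_eq_true, Set.mem_ofPred_eq] at hω hω'
    rw [← Function.update_eq_self v ω, ← Function.update_eq_self v ω', hω.2, hω'.2]
    simpa [raise] using congrArg (Function.update · v false) h
  have hmaps : (S.filter fun ω => ¬ω v).image raise ⊆ S.filter fun ω => ω v := by
    simp only [subset_iff, mem_image, mem_filter]
    rintro _ ⟨ω, ⟨hωS, -⟩, rfl⟩
    exact ⟨hS (le_update_iff.2 ⟨le_top, fun _ _ => le_rfl⟩) hωS, by simp [raise]⟩
  calc ∑ ω ∈ S with ¬ω v, outcomeWeightOff p v ω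
      = ∑ ω ∈ (S.filter fun ω => ¬ω v).image raise, outcomeWeightOff p v ω := by
        rw [sum_image hinj]
        exact sum_congr rfl fun ω _ => (outcomeWeightOff_update_self p v ω true).symm
    _ ≤ _ := sum_le_sum_of_subset_of_nonneg hmaps fun ω _ _ =>
        outcomeWeightOff_nonneg hp0 hp1 v ω

lemma eventProb_update_mono {S : Finset (ι → Bool)} (hS : IsUpperSet (S : Set (ι → Bool)))
    {p : ι → ℝ} (hp0 : ∀ w, 0 ≤ p w) (hp1 : ∀ w, p w ≤ 1) (v : ι) {x y : ℝ}
    (hxy : x ≤ y) :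
    eventProb (Function.update p v x) S ≤ eventProb (Function.update p v y) S := by
  rw [eventProb_update, eventProb_update]
  have hslope := sum_outcomeWeightOff_not_le hS hp0 hp1 v
  nlinarith [mul_nonneg (sub_nonneg.2 hxy) (sub_nonneg.2 hslope)]

theorem eventProb_mono {S : Finset (ι → Bool)} (hS : IsUpperSet (S : Set (ι → Bool)))
    {p p' : ι → ℝ} (hp0 : ∀ v, 0 ≤ p v) (hpp' : p ≤ p') (hp'1 : ∀ v, p' v ≤ 1) :
    eventProb p S ≤ eventProb p' S := by
  suffices key : ∀ s : Finset ι, eventProb p S ≤ eventProb (s.piecewise p' p) S by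
    simpa using key univ
  intro s
  induction s using Finset.induction_on with
  | empty => simp
  | insert v s hv ih =>
    have hbounds : ∀ w, 0 ≤ s.piecewise p' p w ∧ s.piecewise p' p w ≤ 1 := fun w => by
      unfold Finset.piecewise
      split_ifs <;> constructor <;> linarith [hp0 w, hpp' w, hp'1 w]
    calc eventProb p S ≤ eventProb (s.piecewise p' p) S := ih
      _ = eventProb (Function.update (s.piecewise p' p) v (p v)) S := by
        rw [← piecewise_eq_of_notMem s p' p hv, Function.update_eq_self]
      _ ≤ eventProb (Function.update (s.piecewise p' p) v (p' v)) S :=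
        eventProb_update_mono hS (fun w => (hbounds w).1) (fun w => (hbounds w).2) v (hpp' v)
      _ = eventProb ((insert v s).piecewise p' p) S := by rw [piecewise_insert]

lemma card_filter_card_trues_eq (m : ℕ) :
    #{ω : ι → Bool | #{v | ω v} = m} = (Fintype.card ι).choose m := by
  rw [← card_univ, ← card_powersetCard]
  refine card_nbij' (fun ω => ({v | ω v} : Finset ι)) (fun s v => decide (v ∈ s)) ?_ ?_ ?_ ?_
  · intro ω hω
    simp_all [mem_powersetCard]
  · intro s hs
    simp_all [mem_powersetCard]
  · intro ω _
    funext v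
    simp
  · intro s _
    ext v
    simp

theorem choose_mul_pow_mul_pow_le_eventProb {S : Finset (ι → Bool)} {m : ℕ}
    (hS : ({ω | #{v | ω v} = m} : Finset (ι → Bool)) ⊆ S) {q : ℝ} (hq0 : 0 ≤ q)
    (hq1 : q ≤ 1) :
    (Fintype.card ι).choose m * q ^ m * (1 - q) ^ (Fintype.card ι - m)
      ≤ eventProb (fun _ => q) S := by
  calc (Fintype.card ι).choose m * q ^ m * (1 - q) ^ (Fintype.card ι - m)
      = ∑ ω : ι → Bool with #{v | ω v} = m, outcomeWeight (fun _ => q) ω := by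
        rw [sum_congr rfl fun ω hω => by rw [outcomeWeight_const, (mem_filter.1 hω).2],
          sum_const, card_filter_card_trues_eq, nsmul_eq_mul, mul_assoc]
    _ ≤ eventProb (fun _ => q) S :=
        sum_le_sum_of_subset_of_nonneg hS fun ω _ _ =>
          outcomeWeight_nonneg (fun _ => hq0) (fun _ => hq1) ω

end ProductBernoulli

lemma Nat.two_pow_le_centralBinom (n : ℕ) : 2 ^ n ≤ n.centralBinom := by
  induction n with
  | zero => simp
  | succ n ih =>
    have h := Nat.succ_mul_centralBinom_succ n
    have : (n + 1) * (2 * n.centralBinom) ≤ (n + 1) * (n + 1).centralBinom := by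
      rw [h, ← mul_assoc, mul_comm (n + 1) 2]
      gcongr
      omega
    rw [pow_succ]
    linarith [Nat.le_of_mul_le_mul_left this n.succ_pos]

lemma Nat.two_pow_le_choose_two_mul_add_one (j : ℕ) : 2 ^ j ≤ (2 * j + 1).choose (j + 1) := by
  have := Nat.two_pow_le_centralBinom j
  rw [Nat.centralBinom_eq_two_mul_choose] at this
  rw [Nat.choose_succ_succ']
  omega

theorem mul_sqrt_le_choose_mul_pow_mul_pow {k : ℕ} (hk : Odd k) {c q t : ℝ} (hc : 1 ≤ c)
    (ht : 0 ≤ t) (hq : c * t ^ ((1 : ℝ) / (k + 1)) ≤ q) (hq2 : q ≤ 1 / 2) :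
    c * √t ≤ k.choose ((k + 1) / 2) * q ^ ((k + 1) / 2) * (1 - q) ^ ((k - 1) / 2) := by
  obtain ⟨j, rfl⟩ := hk
  rw [show (2 * j + 1 + 1) / 2 = j + 1 by omega, show (2 * j + 1 - 1) / 2 = j by omega]
  have hroot : (t ^ ((1 : ℝ) / (↑(2 * j + 1) + 1))) ^ (j + 1) = √t := by
    rw [← Real.rpow_natCast, ← Real.rpow_mul ht, Real.sqrt_eq_rpow]
    congr 1
    push_cast
    field_simp
    ring
  have hq0 : 0 ≤ q := (mul_nonneg (by linarith) (Real.rpow_nonneg ht _)).trans hq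
  have hqpow : c ^ (j + 1) * √t ≤ q ^ (j + 1) := by
    rw [← hroot, ← mul_pow]
    exact pow_le_pow_left₀ (by positivity) hq _
  have hchoose : (2 : ℝ) ^ j ≤ (2 * j + 1).choose (j + 1) := by
    exact_mod_cast Nat.two_pow_le_choose_two_mul_add_one j
  have hhalf : (1 / 2 : ℝ) ^ j ≤ (1 - q) ^ j := pow_le_pow_left₀ (by norm_num) (by linarith) j
  calc c * √t ≤ (2 ^ j * (1 / 2) ^ j) * c ^ (j + 1) * √t := by
        rw [← mul_pow, show (2 : ℝ) * (1 / 2) = 1 by norm_num, one_pow, one_mul]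
        gcongr
        exact le_self_pow₀ hc (by omega)
    _ = 2 ^ j * (c ^ (j + 1) * √t) * (1 / 2) ^ j := by ring
    _ ≤ (2 * j + 1).choose (j + 1) * q ^ (j + 1) * (1 - q) ^ j := by
        gcongr

def majority (k : ℕ) : Finset (Fin k → Bool) := {ω | k < 2 * #{v | ω v}}

lemma isUpperSet_majority (k : ℕ) : IsUpperSet (majority k : Set (Fin k → Bool)) := by
  intro ω ω' hle hω
  simp only [majority, coe_filter, mem_univ, true_and, Set.mem_ofPred_eq] at hω ⊢
  refine hω.trans_le (Nat.mul_le_mul_left 2 (card_le_card fun v hv => ?_))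
  simp only [mem_filter, mem_univ, true_and] at hv ⊢
  exact top_le_iff.1 (hv.symm.trans_le (hle v))

lemma filter_card_eq_half_succ_subset_majority {k : ℕ} (hk : Odd k) :
    ({ω | #{v | ω v} = (k + 1) / 2} : Finset (Fin k → Bool)) ⊆ majority k := by
  intro ω hω
  simp only [majority, mem_filter, mem_univ, true_and] at hω ⊢
  obtain ⟨j, rfl⟩ := hk
  omega

theorem choose_mul_pow_mul_pow_le_eventProb_majority {k : ℕ} (hk : Odd k) {q : ℝ}
    (hq0 : 0 ≤ q) {qv : Fin k → ℝ} (hqv : ∀ v, q ≤ qv v) (hqv1 : ∀ v, qv v ≤ 1) :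
    k.choose ((k + 1) / 2) * q ^ ((k + 1) / 2) * (1 - q) ^ ((k - 1) / 2)
      ≤ eventProb qv (majority k) := by
  have hslice := choose_mul_pow_mul_pow_le_eventProb (filter_card_eq_half_succ_subset_majority hk)
    hq0 ((hqv ⟨0, hk.pos⟩).trans (hqv1 _))
  have hexp : k - (k + 1) / 2 = (k - 1) / 2 := by obtain ⟨j, rfl⟩ := hk; omega
  rw [Fintype.card_fin, hexp] at hslice
  exact hslice.trans (eventProb_mono (isUpperSet_majority k) (fun _ => hq0) hqv hqv1)

/-- with `k` independent voters (`k` odd), each preferring `a` to `b` with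
probability `qv v ≥ q` (and `q ≤ 1/2`), the probability that a strict majority prefers `a`
to `b` is at least `C(k, (k+1)/2) · q^((k+1)/2) · (1-q)^((k-1)/2)`; moreover if
`q ≥ c·(log n / n)^(1/(k+1))` with `c > √2` and `n ≥ (2c)^(2k+2)`, then this majority
probability is at least `c·√(log n / n)`.  An outcome is `ω : Fin k → Bool`, where `ω v`
records whether voter `v` prefers `a` to `b`; its probability is
`∏ v, (if ω v then qv v else 1 - qv v)`. -/
theorem stmt14 (k : ℕ) (hk : Odd k) (q : ℝ) (hq0 : 0 ≤ q) (hq2 : q ≤ 1 / 2)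
    (qv : Fin k → ℝ) (hqv : ∀ v, q ≤ qv v) (hqv1 : ∀ v, qv v ≤ 1) :
    ((k.choose ((k + 1) / 2) : ℝ) * q ^ ((k + 1) / 2) * (1 - q) ^ ((k - 1) / 2)
      ≤ ∑ ω ∈ univ.filter (fun ω : Fin k → Bool => k < 2 * (univ.filter fun v => ω v = true).card),
          ∏ v : Fin k, (if ω v = true then qv v else 1 - qv v)) ∧
    ∀ (n : ℕ) (c : ℝ), Real.sqrt 2 < c → ((2 * c) ^ (2 * k + 2) ≤ (n : ℝ)) →
      c * (Real.log n / n) ^ ((1 : ℝ) / (k + 1)) ≤ q →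
      c * Real.sqrt (Real.log n / n) ≤
        ∑ ω ∈ univ.filter (fun ω : Fin k → Bool => k < 2 * (univ.filter fun v => ω v = true).card),
          ∏ v : Fin k, (if ω v = true then qv v else 1 - qv v) := by
  have hmajority := choose_mul_pow_mul_pow_le_eventProb_majority hk hq0 hqv hqv1
  refine ⟨hmajority, fun n c hc _ hq => ?_⟩
  have hc1 : 1 ≤ c := by linarith [Real.one_lt_sqrt_two]
  have ht : 0 ≤ Real.log n / n := div_nonneg (Real.log_natCast_nonneg n) n.cast_nonneg
  exact (mul_sqrt_le_choose_mul_pow_mul_pow hk hc1 ht hq hq2).trans hmajority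
end
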